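/- arXiv:1110.5979 — 2 statements merged into one kernel-verified Lean document; each statement's English description precedes it below -/
import Mathlib

section
/- A 3×3 block operator matrix with identity diagonal blocks and unitary off-diagonal blocks, namely M = [[1, U, V], [U†, 1, W], [V†, W†, 1]] where U, V, W are unitary operators on a finite-dimensional complex Hilbert space H, is positive semi-definite if and only if V = U * W. -/
open Matrix Kronecker Finset ComplexOrder

noncomputable section
open scoped Classical

/-- The old `Matrix.PosSemidef.sqrt` (removed from Mathlib), with its old definition. -/
def posSemidefSqrt {m : Type*} [Fintype m] [DecidableEq m] {A : Matrix m m ℂ} (hA : A.PosSemidef) :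
    Matrix m m ℂ :=
  hA.1.eigenvectorUnitary.1 * diagonal ((↑) ∘ (√·) ∘ hA.1.eigenvalues) *
    (star hA.1.eigenvectorUnitary : Matrix m m ℂ)

/-- Square root of a matrix: the PSD square root if the matrix is PSD, else 0. -/
def mSqrt {m : Type*} [Fintype m] [DecidableEq m] (A : Matrix m m ℂ) : Matrix m m ℂ :=

  if h : A.PosSemidef then posSemidefSqrt h else 0

/-- Operator absolute value `|A| = √(Aᴴ A)`. -/
def mAbs {m : Type*} [Fintype m] [DecidableEq m] (A : Matrix m m ℂ) : Matrix m m ℂ :=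
  posSemidefSqrt (Matrix.posSemidef_conjTranspose_mul_self A)

/-- Von Neumann entropy (base-2), via eigenvalues of a Hermitian matrix. -/
def vnEntropy {m : Type*} [Fintype m] [DecidableEq m] (ρ : Matrix m m ℂ) : ℝ :=
  if h : ρ.IsHermitian then -∑ i, (h.eigenvalues i) * Real.logb 2 (h.eigenvalues i) else 0

/-- Partial trace over the first tensor factor. -/
def ptraceA {m p : Type*} [Fintype m] [Fintype p] (X : Matrix (m × p) (m × p) ℂ) :
    Matrix p p ℂ := Matrix.of fun a b => ∑ k, X (k, a) (k, b)

/-- Partial trace over the second tensor factor. -/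
def ptraceB {m p : Type*} [Fintype m] [Fintype p] (X : Matrix (m × p) (m × p) ℂ) :
    Matrix m m ℂ := Matrix.of fun a b => ∑ k, X (a, k) (b, k)

/-- Fidelity `F(ρ,σ) = (Tr |√ρ √σ|)²`. -/
def fidelity {m : Type*} [Fintype m] [DecidableEq m] (ρ σ : Matrix m m ℂ) : ℝ :=
  ((mAbs (mSqrt ρ * mSqrt σ)).trace.re) ^ 2

/-!
If `V = U W`, then `M` is the Gram matrix `Rᴴ R` of the block row `R = [1, U, U W]`, hence
positive semidefinite. Conversely, compressing `M` by the block column `C = [U W - V, -W, 1]` gives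
`Cᴴ M C = -(V - U W)ᴴ (V - U W)`, and `-Dᴴ D` is positive semidefinite only when `D = 0`.
-/

namespace Matrix

variable {ι m k R : Type*} [Ring R] [StarRing R]

def blockRow (X : ι → Matrix k m R) : Matrix k (ι × m) R :=
  of fun a p => X p.1 a p.2

def blockCol (C : ι → Matrix m k R) : Matrix (ι × m) k R :=
  of fun p a => C p.1 p.2 a

lemma comp_conjTranspose_mul_self [Fintype k] (X : ι → Matrix k m R) :
    comp ι ι m m R (of fun i j => (X i)ᴴ * X j) = (blockRow X)ᴴ * blockRow X := by
  ext ⟨i, x⟩ ⟨j, y⟩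
  simp [blockRow, mul_apply]

lemma posSemidef_comp_conjTranspose_mul_self [Fintype ι] [Fintype m] [Fintype k]
    [PartialOrder R] [StarOrderedRing R] (X : ι → Matrix k m R) :
    (comp ι ι m m R (of fun i j => (X i)ᴴ * X j)).PosSemidef := by
  rw [comp_conjTranspose_mul_self]
  exact posSemidef_conjTranspose_mul_self _

lemma blockCol_conjTranspose_mul_comp_mul [Fintype ι] [Fintype m]
    (B : Matrix ι ι (Matrix m m R)) (C : ι → Matrix m k R) :
    (blockCol C)ᴴ * comp ι ι m m R B * blockCol C = ∑ i, ∑ j, (C i)ᴴ * B i j * C j := by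
  ext a b
  simp only [blockCol, mul_apply, conjTranspose_apply, of_apply, comp_apply,
    Fintype.sum_prod_type, Matrix.sum_apply, Finset.sum_mul, mul_assoc]
  exact (Finset.sum_congr rfl fun j _ => Finset.sum_comm).trans Finset.sum_comm

lemma PosSemidef.sum_conjTranspose_mul_mul [Fintype ι] [Fintype m] [Finite k] [PartialOrder R]
    {B : Matrix ι ι (Matrix m m R)} (hB : (comp ι ι m m R B).PosSemidef) (C : ι → Matrix m k R) :
    (∑ i, ∑ j, (C i)ᴴ * B i j * C j).PosSemidef := by
  rw [← blockCol_conjTranspose_mul_comp_mul]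
  exact hB.conjTranspose_mul_mul_same _

open MatrixOrder in
lemma eq_zero_of_posSemidef_neg_conjTranspose_mul_self {𝕜 : Type*} [RCLike 𝕜] [Fintype m]
    [Fintype k] {D : Matrix m k 𝕜} (h : (-(Dᴴ * D)).PosSemidef) : D = 0 :=
  conjTranspose_mul_self_eq_zero.mp <|
    le_antisymm (by simpa [le_iff] using h) (posSemidef_conjTranspose_mul_self D).nonneg

end Matrix

theorem stmt0_general (n : ℕ) (U V W : Matrix (Fin n) (Fin n) ℂ)
    (hU : U ∈ Matrix.unitaryGroup (Fin n) ℂ)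
    (hW : W ∈ Matrix.unitaryGroup (Fin n) ℂ) :
    (Matrix.of fun x y : Fin 3 × Fin n =>
        (![![(1 : Matrix (Fin n) (Fin n) ℂ), U, V], ![Uᴴ, 1, W], ![Vᴴ, Wᴴ, 1]] x.1 y.1)
          x.2 y.2).PosSemidef ↔ V = U * W := by
  have hUU : Uᴴ * U = 1 := Unitary.star_mul_self_of_mem hU
  have hWW : Wᴴ * W = 1 := Unitary.star_mul_self_of_mem hW
  change (comp (Fin 3) (Fin 3) (Fin n) (Fin n) ℂ _).PosSemidef ↔ _
  constructor
  · intro hM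
    have h : (-((V - U * W)ᴴ * (V - U * W))).PosSemidef := by
      convert hM.sum_conjTranspose_mul_mul ![U * W - V, -W, 1] using 1
      simp [Fin.sum_univ_three, conjTranspose_mul, mul_sub, sub_mul, mul_assoc, hWW]
      abel
    exact sub_eq_zero.mp (eq_zero_of_posSemidef_neg_conjTranspose_mul_self h)
  · rintro rfl
    have hgram : ![![1, U, U * W], ![Uᴴ, 1, W], ![(U * W)ᴴ, Wᴴ, 1]] =
        of fun i j => (![1, U, U * W] i)ᴴ * ![1, U, U * W] j := by
      funext i j
      fin_cases i <;> fin_cases j <;> simp [mul_assoc, ← mul_assoc Uᴴ U, hUU, hWW]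
    rw [hgram]
    exact posSemidef_comp_conjTranspose_mul_self _

/-- A 3×3 block matrix [[1,U,V],[U†,1,W],[V†,W†,1]] with unitary U,V,W is PSD iff V = U W. -/
theorem stmt0 (n : ℕ) (U V W : Matrix (Fin n) (Fin n) ℂ)
    (hU : U ∈ Matrix.unitaryGroup (Fin n) ℂ)
    (hV : V ∈ Matrix.unitaryGroup (Fin n) ℂ)
    (hW : W ∈ Matrix.unitaryGroup (Fin n) ℂ) :
    (Matrix.of fun x y : Fin 3 × Fin n =>
        (![![(1 : Matrix (Fin n) (Fin n) ℂ), U, V], ![Uᴴ, 1, W], ![Vᴴ, Wᴴ, 1]] x.1 y.1)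
          x.2 y.2).PosSemidef ↔ V = U * W :=
  stmt0_general n U V W hU hW
end
end

section
/- With the setup of the previous construction (blocks √(p_i p_j)√ρ_i X_{ij} √ρ_j with V = UW), the partial trace of ρ_AB over the n-dimensional factor equals Σ_i p_i ρ_i, and the partial trace over the 3-dimensional factor is the 3×3 matrix whose (i,j) entry is √(p_i p_j F(ρ_i, ρ_j)), i.e., the correlation matrix C_√F of the ensemble, where F(ρ_i, ρ_j) = (Tr|√ρ_i √ρ_j|)² is the fidelity. -/
open Matrix Kronecker Finset ComplexOrder

noncomputable section
open scoped Classical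

/-! The `(i, j)` entry of the marginal on the 3-dimensional factor is
`√(p_i p_j) Tr[√ρ_i X_ij √ρ_j]`. If `X` is the unitary polar factor of `A = √ρ_j √ρ_i`, then
`Tr[√ρ_i X √ρ_j] = Tr[X A] = Tr |A|`, and `Aᴴ = √ρ_i √ρ_j` has polar factor `Xᴴ`, so `|Aᴴ|` has
the same (real) trace; hence the entry is `√(p_i p_j F(ρ_i, ρ_j))`. Below the diagonal the blocks
are exactly these adjoint polar factors, and on the diagonal `1` is a polar factor of
`√ρ_i √ρ_i = |√ρ_i √ρ_i|`. The other marginal only sees the diagonal blocks `p_i ρ_i`. -/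

section Polar

variable {m : Type*} [Fintype m] [DecidableEq m]

open scoped MatrixOrder

lemma posSemidefSqrt_eq_cfcSqrt {A : Matrix m m ℂ} (hA : A.PosSemidef) :
    posSemidefSqrt hA = CFC.sqrt A := by
  rw [CFC.sqrt_eq_real_sqrt A hA.nonneg, cfcₙ_eq_cfc, hA.1.cfc_eq, IsHermitian.cfc,
    Unitary.conjStarAlgAut_apply]
  rfl

lemma mSqrt_posSemidef (A : Matrix m m ℂ) : (mSqrt A).PosSemidef := by
  unfold mSqrt
  split_ifs with hA
  · rw [posSemidefSqrt_eq_cfcSqrt]; exact (CFC.sqrt_nonneg A).posSemidef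
  · exact PosSemidef.zero

lemma mSqrt_mul_self {A : Matrix m m ℂ} (hA : A.PosSemidef) : mSqrt A * mSqrt A = A := by
  rw [mSqrt, dif_pos hA, posSemidefSqrt_eq_cfcSqrt]
  exact CFC.sqrt_mul_sqrt_self A hA.nonneg

lemma mAbs_posSemidef (A : Matrix m m ℂ) : (mAbs A).PosSemidef := by
  rw [mAbs, posSemidefSqrt_eq_cfcSqrt]; exact (CFC.sqrt_nonneg _).posSemidef

lemma mAbs_eq_of_sq_eq {A C : Matrix m m ℂ} (hC : C.PosSemidef) (h : C ^ 2 = Aᴴ * A) :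
    mAbs A = C := by
  rw [mAbs, posSemidefSqrt_eq_cfcSqrt]
  exact CFC.sqrt_unique (by rw [← pow_two, h]) hC.nonneg

lemma mAbs_of_posSemidef {A : Matrix m m ℂ} (hA : A.PosSemidef) : mAbs A = A :=
  mAbs_eq_of_sq_eq hA (by rw [pow_two, hA.1.eq])

lemma trace_mAbs_eq_ofReal_re (A : Matrix m m ℂ) :
    (mAbs A).trace = ((mAbs A).trace.re : ℂ) := by
  obtain ⟨-, him⟩ := Complex.nonneg_iff.mp (mAbs_posSemidef A).trace_nonneg
  exact Complex.ext (by simp) (by simp [← him])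

lemma mAbs_conjTranspose_of_polar {A X : Matrix m m ℂ} (hX : X ∈ unitaryGroup m ℂ)
    (h : mAbs A = X * A) : mAbs Aᴴ = Xᴴ * Aᴴ := by
  have hXX : Xᴴ * X = 1 := mem_unitaryGroup_iff'.mp hX
  have hXA : (X * A).PosSemidef := h ▸ mAbs_posSemidef A
  have hAX : (A * X).PosSemidef := by
    simpa only [← mul_assoc, hXX, one_mul] using hXA.conjTranspose_mul_mul_same X
  have hAX_eq : A * X = Xᴴ * Aᴴ := by rw [← conjTranspose_mul, hAX.1.eq]
  rw [← hAX_eq]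
  refine mAbs_eq_of_sq_eq hAX ?_
  calc (A * X) ^ 2 = A * (X * A) * X := by rw [pow_two]; simp only [mul_assoc]
    _ = A * (Aᴴ * Xᴴ) * X := by rw [← conjTranspose_mul, hXA.1.eq]
    _ = Aᴴᴴ * Aᴴ := by rw [conjTranspose_conjTranspose]; simp only [mul_assoc, hXX, mul_one]

lemma trace_mAbs_conjTranspose_of_polar {A X : Matrix m m ℂ} (hX : X ∈ unitaryGroup m ℂ)
    (h : mAbs A = X * A) : (mAbs Aᴴ).trace = (mAbs A).trace := by
  rw [mAbs_conjTranspose_of_polar hX h, ← conjTranspose_mul, trace_conjTranspose,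
    trace_mul_comm, ← h, trace_mAbs_eq_ofReal_re, Complex.star_def, Complex.conj_ofReal]

lemma ofReal_sqrt_fidelity (ρ σ : Matrix m m ℂ) :
    (√(fidelity ρ σ) : ℂ) = (mAbs (mSqrt ρ * mSqrt σ)).trace := by
  have hre := (Complex.nonneg_iff.mp (mAbs_posSemidef (mSqrt ρ * mSqrt σ)).trace_nonneg).1
  rw [fidelity, Real.sqrt_sq hre, ← trace_mAbs_eq_ofReal_re]

lemma trace_mSqrt_mul_polar_mul {ρ σ X : Matrix m m ℂ} (hX : X ∈ unitaryGroup m ℂ)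
    (hpol : mAbs (mSqrt σ * mSqrt ρ) = X * (mSqrt σ * mSqrt ρ)) :
    (mSqrt ρ * X * mSqrt σ).trace = √(fidelity ρ σ) := by
  calc (mSqrt ρ * X * mSqrt σ).trace = (X * (mSqrt σ * mSqrt ρ)).trace := by
        rw [trace_mul_cycle, trace_mul_comm]
    _ = (mAbs (mSqrt σ * mSqrt ρ)ᴴ).trace := by
        rw [← hpol, trace_mAbs_conjTranspose_of_polar hX hpol]
    _ = √(fidelity ρ σ) := by
        rw [conjTranspose_mul, (mSqrt_posSemidef σ).1.eq, (mSqrt_posSemidef ρ).1.eq,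
          ofReal_sqrt_fidelity]

lemma mAbs_mSqrt_mul_mSqrt_of_polar {ρ σ X : Matrix m m ℂ} (hX : X ∈ unitaryGroup m ℂ)
    (hpol : mAbs (mSqrt σ * mSqrt ρ) = X * (mSqrt σ * mSqrt ρ)) :
    mAbs (mSqrt ρ * mSqrt σ) = Xᴴ * (mSqrt ρ * mSqrt σ) := by
  simpa only [conjTranspose_mul, (mSqrt_posSemidef σ).1.eq, (mSqrt_posSemidef ρ).1.eq]
    using mAbs_conjTranspose_of_polar hX hpol

lemma mAbs_mSqrt_mul_self (ρ : Matrix m m ℂ) :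
    mAbs (mSqrt ρ * mSqrt ρ) = 1 * (mSqrt ρ * mSqrt ρ) := by
  rw [one_mul, mAbs_of_posSemidef]
  simpa only [(mSqrt_posSemidef ρ).1.eq] using posSemidef_conjTranspose_mul_self (mSqrt ρ)

end Polar

section PartialTrace

variable {m p : Type*} [Fintype m] [Fintype p]

lemma ptraceA_of_blocks (B : m → m → Matrix p p ℂ) :
    ptraceA (of fun x y : m × p => B x.1 y.1 x.2 y.2) = ∑ k, B k k := by
  ext a b
  simp [ptraceA, Matrix.sum_apply]

lemma ptraceB_of_blocks (B : m → m → Matrix p p ℂ) :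
    ptraceB (of fun x y : m × p => B x.1 y.1 x.2 y.2) = of fun i j => (B i j).trace := by
  ext i j
  simp [ptraceB, trace]

end PartialTrace

theorem stmt11_general (n : ℕ)
(ρ : Fin 3 → Matrix (Fin n) (Fin n) ℂ)
    (hρ : ∀ i, (ρ i).PosSemidef ∧ (ρ i).trace = 1)
    (p : Fin 3 → ℝ) (hp : ∀ i, 0 < p i)
    (U V W : Matrix (Fin n) (Fin n) ℂ)
    (hU : U ∈ Matrix.unitaryGroup (Fin n) ℂ)
    (hV : V ∈ Matrix.unitaryGroup (Fin n) ℂ)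
    (hW : W ∈ Matrix.unitaryGroup (Fin n) ℂ)
    (hpolU : mAbs (mSqrt (ρ 1) * mSqrt (ρ 0)) = U * (mSqrt (ρ 1) * mSqrt (ρ 0)))
    (hpolV : mAbs (mSqrt (ρ 2) * mSqrt (ρ 0)) = V * (mSqrt (ρ 2) * mSqrt (ρ 0)))
    (hpolW : mAbs (mSqrt (ρ 2) * mSqrt (ρ 1)) = W * (mSqrt (ρ 2) * mSqrt (ρ 1)))
    (ρAB : Matrix (Fin 3 × Fin n) (Fin 3 × Fin n) ℂ)
    (hρAB : ρAB = Matrix.of fun x y : Fin 3 × Fin n =>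
      (Real.sqrt (p x.1 * p y.1) : ℂ) *
        (mSqrt (ρ x.1) *
          (![![(1 : Matrix (Fin n) (Fin n) ℂ), U, V], ![Uᴴ, 1, W], ![Vᴴ, Wᴴ, 1]] x.1 y.1) *
          mSqrt (ρ y.1)) x.2 y.2) :
    ptraceA ρAB = ∑ i, p i • ρ i ∧
    ptraceB ρAB = Matrix.of (fun i j : Fin 3 =>
      (Real.sqrt (p i * p j * fidelity (ρ i) (ρ j)) : ℂ)) := by
  set X := ![![(1 : Matrix (Fin n) (Fin n) ℂ), U, V], ![Uᴴ, 1, W], ![Vᴴ, Wᴴ, 1]]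
  have hunit : ∀ i j, X i j ∈ unitaryGroup (Fin n) ℂ := by
    intro i j
    fin_cases i <;> fin_cases j
    all_goals first | exact one_mem _ | assumption | exact Unitary.star_mem ‹_›
  have hpolar : ∀ i j,
      mAbs (mSqrt (ρ j) * mSqrt (ρ i)) = X i j * (mSqrt (ρ j) * mSqrt (ρ i)) := by
    intro i j
    fin_cases i <;> fin_cases j
    exacts [mAbs_mSqrt_mul_self _, hpolU, hpolV, mAbs_mSqrt_mul_mSqrt_of_polar hU hpolU,
      mAbs_mSqrt_mul_self _, hpolW, mAbs_mSqrt_mul_mSqrt_of_polar hV hpolV,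
      mAbs_mSqrt_mul_mSqrt_of_polar hW hpolW, mAbs_mSqrt_mul_self _]
  set B : Fin 3 → Fin 3 → Matrix (Fin n) (Fin n) ℂ :=
    fun i j => (√(p i * p j) : ℂ) • (mSqrt (ρ i) * X i j * mSqrt (ρ j))
  have hB : ρAB = of fun x y : Fin 3 × Fin n => B x.1 y.1 x.2 y.2 := hρAB
  rw [hB, ptraceA_of_blocks, ptraceB_of_blocks]
  refine ⟨Finset.sum_congr rfl fun k _ => ?_, ?_⟩
  · have hXkk : X k k = 1 := by fin_cases k <;> rfl
    simp only [B]
    rw [hXkk, mul_one, mSqrt_mul_self (hρ k).1, Real.sqrt_mul_self (hp k).le, Complex.coe_smul]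
  · ext i j
    simp only [B, of_apply]
    rw [trace_smul, trace_mSqrt_mul_polar_mul (hunit i j) (hpolar i j),
      Real.sqrt_mul (mul_pos (hp i) (hp j)).le, smul_eq_mul, Complex.ofReal_mul]

/-- The marginals of the block construction: the average state and the correlation matrix. -/
theorem stmt11 (n : ℕ)
(ρ : Fin 3 → Matrix (Fin n) (Fin n) ℂ)
    (hρ : ∀ i, (ρ i).PosSemidef ∧ (ρ i).trace = 1)
    (p : Fin 3 → ℝ) (hp : ∀ i, 0 < p i) (hpsum : ∑ i, p i = 1)
    (U V W : Matrix (Fin n) (Fin n) ℂ)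
    (hU : U ∈ Matrix.unitaryGroup (Fin n) ℂ)
    (hV : V ∈ Matrix.unitaryGroup (Fin n) ℂ)
    (hW : W ∈ Matrix.unitaryGroup (Fin n) ℂ)
    (hpolU : mAbs (mSqrt (ρ 1) * mSqrt (ρ 0)) = U * (mSqrt (ρ 1) * mSqrt (ρ 0)))
    (hpolV : mAbs (mSqrt (ρ 2) * mSqrt (ρ 0)) = V * (mSqrt (ρ 2) * mSqrt (ρ 0)))
    (hpolW : mAbs (mSqrt (ρ 2) * mSqrt (ρ 1)) = W * (mSqrt (ρ 2) * mSqrt (ρ 1)))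
    (hVUW : V = U * W)
    (ρAB : Matrix (Fin 3 × Fin n) (Fin 3 × Fin n) ℂ)
    (hρAB : ρAB = Matrix.of fun x y : Fin 3 × Fin n =>
      (Real.sqrt (p x.1 * p y.1) : ℂ) *
        (mSqrt (ρ x.1) *
          (![![(1 : Matrix (Fin n) (Fin n) ℂ), U, V], ![Uᴴ, 1, W], ![Vᴴ, Wᴴ, 1]] x.1 y.1) *
          mSqrt (ρ y.1)) x.2 y.2) :
    ptraceA ρAB = ∑ i, p i • ρ i ∧
    ptraceB ρAB = Matrix.of (fun i j : Fin 3 =>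
      (Real.sqrt (p i * p j * fidelity (ρ i) (ρ j)) : ℂ)) :=
  stmt11_general n ρ hρ p hp U V W hU hV hW hpolU hpolV hpolW ρAB hρAB
end
end
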